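/- arXiv:1202.1994 — 6 statements merged into one kernel-verified Lean document; each statement's English description precedes it below -/
import Mathlib

section
/- Let p : [-1,1] → ℝ be continuous, even and strictly positive, define L f(v) = (1/2)∫_{-1}^{1} p(v) p(w) (f(w) − f(v)) dw, and set α = ∫_0^1 p(v) dv. Let h ∈ L²([-1,1]) satisfy ⟨h⟩_V = 0. Then the function u := (1/α)( ⟨h/p⟩_V·1 − h/p ) satisfies ⟨u⟩_V = 0 and L u = h almost everywhere; moreover u is the unique element of L²([-1,1]) with these two properties. (In other words, u = L^{-1} h, where L^{-1} denotes the pseudo-inverse of L on the range {h : ⟨h⟩_V = 0}.) -/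
/-!
Evenness gives `∫_{-1}^1 p = 2α`, so `L f (v) = p(v) (⟨p f⟩_V - α f(v))`: the equation
`L f = h` determines `f` pointwise as `(⟨p f⟩_V - h/p)/α` up to the single number `⟨p f⟩_V`.
For the proposed `u`, `⟨p u⟩_V = ⟨h/p⟩_V` because `⟨h⟩_V = 0`, which gives `L u = h`; and two
mean-zero solutions differ by a constant of mean zero, hence agree a.e.
-/

open MeasureTheory Set

theorem integral_neg_self_eq_two_mul_of_even {f : ℝ → ℝ} {a : ℝ}
    (hf : IntervalIntegrable f volume (-a) a) (heven : ∀ x ∈ uIcc 0 a, f (-x) = f x) :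
    ∫ x in -a..a, f x = 2 * ∫ x in 0..a, f x := by
  have h0 : (0 : ℝ) ∈ uIcc (-a) a := by
    rcases le_total 0 a with ha | ha
    · exact mem_uIcc.2 (Or.inl ⟨by linarith, ha⟩)
    · exact mem_uIcc.2 (Or.inr ⟨ha, by linarith⟩)
  have hneg : ∫ x in -a..0, f x = ∫ x in 0..a, f x :=
    calc ∫ x in -a..0, f x = ∫ x in 0..a, f (-x) := by simp [intervalIntegral.integral_comp_neg]
      _ = ∫ x in 0..a, f x := intervalIntegral.integral_congr heven
  rw [← intervalIntegral.integral_add_adjacent_intervals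
    (hf.mono_set (uIcc_subset_uIcc left_mem_uIcc h0))
    (hf.mono_set (uIcc_subset_uIcc h0 right_mem_uIcc)), hneg]
  ring

theorem ae_eq_of_sub_ae_eq_const_of_integral_eq {X : Type*} [MeasurableSpace X] {μ : Measure X}
    [IsFiniteMeasure μ] [NeZero μ] {f g : X → ℝ} {c : ℝ} (hf : Integrable f μ)
    (hg : Integrable g μ) (hfg : ∀ᵐ x ∂μ, f x - g x = c) (hint : ∫ x, f x ∂μ = ∫ x, g x ∂μ) :
    f =ᵐ[μ] g := by
  have hc : μ.real univ * c = 0 := by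
    rw [← smul_eq_mul, ← integral_const, ← integral_congr_ae hfg, integral_sub hf hg, hint,
      sub_self]
  have hc0 : c = 0 := (mul_eq_zero.1 hc).resolve_left measureReal_univ_ne_zero
  filter_upwards [hfg] with x hx
  linarith

theorem integral_const_mul_mul_sub {p f : ℝ → ℝ} {a b : ℝ} (hp : IntervalIntegrable p volume a b)
    (hpf : IntervalIntegrable (fun w => p w * f w) volume a b) (c y : ℝ) :
    ∫ w in a..b, c * p w * (f w - y) = c * ((∫ w in a..b, p w * f w) - y * ∫ w in a..b, p w) := by
  have hsplit : (fun w => c * p w * (f w - y)) = fun w => c * (p w * f w) - c * y * p w := by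
    funext w; ring
  rw [hsplit, intervalIntegral.integral_sub (hpf.const_mul c) (hp.const_mul _),
    intervalIntegral.integral_const_mul, intervalIntegral.integral_const_mul]
  ring

-- The paper's `⟨f⟩_V` and `L f`, for the cross section `σ(v, w) = p(v) p(w)`.
noncomputable def velocityMean (f : ℝ → ℝ) : ℝ := (1 / 2) * ∫ v in (-1 : ℝ)..1, f v

noncomputable def collisionOp (p f : ℝ → ℝ) (v : ℝ) : ℝ :=
  (1 / 2) * ∫ w in (-1 : ℝ)..1, p v * p w * (f w - f v)

local notation "μV" => volume.restrict (Icc (-1 : ℝ) 1)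

instance : NeZero μV := ⟨by simp⟩

theorem intervalIntegrable_neg_one_one_of_integrableOn {f : ℝ → ℝ}
    (hf : IntegrableOn f (Icc (-1 : ℝ) 1)) :
    IntervalIntegrable f volume (-1) 1 :=
  (intervalIntegrable_iff_integrableOn_Icc_of_le (by norm_num)).2 hf

theorem velocityMean_eq_integral (f : ℝ → ℝ) : velocityMean f = (1 / 2) * ∫ v, f v ∂μV := by
  rw [velocityMean, intervalIntegral.integral_of_le (by norm_num), integral_Icc_eq_integral_Ioc]

theorem velocityMean_pos {p : ℝ → ℝ} (hp_cont : ContinuousOn p (Icc (-1 : ℝ) 1))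
    (hp_pos : ∀ v ∈ Icc (-1 : ℝ) 1, 0 < p v) : 0 < velocityMean p := by
  have := intervalIntegral.intervalIntegral_pos_of_pos_on
    (intervalIntegrable_neg_one_one_of_integrableOn hp_cont.integrableOn_Icc)
    (fun v hv => hp_pos v (Ioo_subset_Icc_self hv)) (by norm_num)
  rw [velocityMean]
  positivity

theorem velocityMean_eq_integral_zero_one_of_even {p : ℝ → ℝ}
    (hp : IntegrableOn p (Icc (-1 : ℝ) 1)) (hp_even : ∀ v ∈ Icc (-1 : ℝ) 1, p (-v) = p v) :
    velocityMean p = ∫ v in (0 : ℝ)..1, p v := by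
  rw [velocityMean, integral_neg_self_eq_two_mul_of_even
    (intervalIntegrable_neg_one_one_of_integrableOn hp) fun v hv => hp_even v ?_]
  · ring
  · rw [uIcc_of_le zero_le_one] at hv
    exact ⟨by linarith [hv.1], hv.2⟩

theorem velocityMean_const_mul_sub {g : ℝ → ℝ} (hg : IntegrableOn g (Icc (-1 : ℝ) 1)) (a c : ℝ) :
    velocityMean (fun v => a * (c - g v)) = a * (c - velocityMean g) := by
  simp only [velocityMean]
  rw [intervalIntegral.integral_const_mul, intervalIntegral.integral_sub intervalIntegrable_const
    (intervalIntegrable_neg_one_one_of_integrableOn hg), intervalIntegral.integral_const]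
  simp only [smul_eq_mul]
  ring

section CollisionOp

variable {p f : ℝ → ℝ}

theorem collisionOp_eq (hp : IntegrableOn p (Icc (-1 : ℝ) 1))
    (hpf : IntegrableOn (fun w => p w * f w) (Icc (-1 : ℝ) 1)) (v : ℝ) :
    collisionOp p f v = p v * (velocityMean (fun w => p w * f w) - velocityMean p * f v) := by
  rw [collisionOp, integral_const_mul_mul_sub (intervalIntegrable_neg_one_one_of_integrableOn hp)
    (intervalIntegrable_neg_one_one_of_integrableOn hpf), velocityMean, velocityMean]
  ring

theorem collisionOp_eq_iff (hp : IntegrableOn p (Icc (-1 : ℝ) 1))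
    (hpf : IntegrableOn (fun w => p w * f w) (Icc (-1 : ℝ) 1)) {v y : ℝ} (hpv : p v ≠ 0)
    (hα : velocityMean p ≠ 0) :
    collisionOp p f v = y ↔
      f v = 1 / velocityMean p * (velocityMean (fun w => p w * f w) - y / p v) := by
  rw [collisionOp_eq hp hpf]
  field_simp
  constructor <;> intro h <;> linarith

theorem velocityMean_mul_explicitSolution {h : ℝ → ℝ} (hp : IntegrableOn p (Icc (-1 : ℝ) 1))
    (hp0 : ∀ v ∈ Icc (-1 : ℝ) 1, p v ≠ 0) (hh : IntegrableOn h (Icc (-1 : ℝ) 1))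
    (hmean : velocityMean h = 0) (hα : velocityMean p ≠ 0) (c : ℝ) :
    velocityMean (fun w => p w * (1 / velocityMean p * (c - h w / p w))) = c := by
  have hEq : EqOn (fun w => p w * (1 / velocityMean p * (c - h w / p w)))
      (fun w => 1 / velocityMean p * (c * p w - h w)) (Icc (-1 : ℝ) 1) := by
    intro w hw
    have := hp0 w hw
    field_simp
  have hp2 : ∫ v, p v ∂μV = 2 * velocityMean p := by rw [velocityMean_eq_integral]; ring
  have hh2 : ∫ v, h v ∂μV = 0 := by rw [velocityMean_eq_integral] at hmean; linarith
  rw [velocityMean_eq_integral, setIntegral_congr_fun measurableSet_Icc hEq, integral_const_mul,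
    integral_sub (hp.const_mul c) hh, integral_const_mul, hp2, hh2]
  field_simp
  ring

theorem ae_eq_of_collisionOp_ae_eq {g : ℝ → ℝ} (hp_cont : ContinuousOn p (Icc (-1 : ℝ) 1))
    (hp0 : ∀ v ∈ Icc (-1 : ℝ) 1, p v ≠ 0) (hα : velocityMean p ≠ 0)
    (hf : IntegrableOn f (Icc (-1 : ℝ) 1)) (hg : IntegrableOn g (Icc (-1 : ℝ) 1))
    (hf_mean : velocityMean f = 0) (hg_mean : velocityMean g = 0)
    (hL : ∀ᵐ v ∂μV, collisionOp p f v = collisionOp p g v) : f =ᵐ[μV] g := by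
  have hp := hp_cont.integrableOn_Icc (μ := volume)
  have hpf := hf.continuousOn_mul hp_cont isCompact_Icc
  have hpg := hg.continuousOn_mul hp_cont isCompact_Icc
  refine ae_eq_of_sub_ae_eq_const_of_integral_eq hf hg
    (c := (velocityMean (fun w => p w * f w) - velocityMean (fun w => p w * g w)) / velocityMean p)
    ?_ ?_
  · filter_upwards [hL, ae_restrict_mem measurableSet_Icc] with v hLv hv
    rw [collisionOp_eq hp hpf, collisionOp_eq hp hpg] at hLv
    have := mul_left_cancel₀ (hp0 v hv) hLv
    field_simp
    linarith
  · rw [velocityMean_eq_integral] at hf_mean hg_mean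
    linarith

end CollisionOp

/-- explicit pseudo-inverse of the product-kernel collision operator.
If `⟨h⟩_V = 0` then `u = (1/α)(⟨h/p⟩_V·1 − h/p)` is the unique mean-zero `L²`
solution of `L u = h` (a.e.), where `α = ∫_0^1 p`. -/
theorem stmt_4
    (p : ℝ → ℝ)
    (hp_cont : ContinuousOn p (Icc (-1:ℝ) 1))
    (hp_even : ∀ v ∈ Icc (-1:ℝ) 1, p (-v) = p v)
    (hp_pos : ∀ v ∈ Icc (-1:ℝ) 1, 0 < p v)
    (α : ℝ) (hα : α = ∫ v in (0:ℝ)..1, p v)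
    (h : ℝ → ℝ)
    (hh : MemLp h 2 (volume.restrict (Icc (-1:ℝ) 1)))
    (hmean : (1/2) * (∫ v in (-1:ℝ)..1, h v) = 0)
    (u : ℝ → ℝ)
    (hu : ∀ v, u v = (1/α) * ((1/2) * (∫ w in (-1:ℝ)..1, h w / p w) - h v / p v)) :
    -- u has zero mean
    ((1/2) * ∫ v in (-1:ℝ)..1, u v) = 0 ∧
    -- L u = h almost everywhere
    (∀ᵐ v ∂(volume.restrict (Icc (-1:ℝ) 1)),
        (1/2) * (∫ w in (-1:ℝ)..1, p v * p w * (u w - u v)) = h v) ∧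
    -- uniqueness in L² among mean-zero solutions
    (∀ u' : ℝ → ℝ, MemLp u' 2 (volume.restrict (Icc (-1:ℝ) 1)) →
      ((1/2) * ∫ v in (-1:ℝ)..1, u' v) = 0 →
      (∀ᵐ v ∂(volume.restrict (Icc (-1:ℝ) 1)),
          (1/2) * (∫ w in (-1:ℝ)..1, p v * p w * (u' w - u' v)) = h v) →
      u' =ᵐ[volume.restrict (Icc (-1:ℝ) 1)] u) := by
  have hp := hp_cont.integrableOn_Icc (μ := volume)
  have hp0 : ∀ v ∈ Icc (-1 : ℝ) 1, p v ≠ 0 := fun v hv => (hp_pos v hv).ne'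
  have hpα : velocityMean p = α := hα ▸ velocityMean_eq_integral_zero_one_of_even hp hp_even
  have hα0 : velocityMean p ≠ 0 := (velocityMean_pos hp_cont hp_pos).ne'
  have hh_int : IntegrableOn h (Icc (-1 : ℝ) 1) := hh.integrable one_le_two
  have hhp_int : IntegrableOn (fun v => h v / p v) (Icc (-1 : ℝ) 1) := by
    simpa only [div_eq_mul_inv, Pi.inv_apply] using
      hh_int.mul_continuousOn (hp_cont.inv₀ hp0) isCompact_Icc
  have hu_eq :
      u = fun v => 1 / velocityMean p * (velocityMean (fun w => h w / p w) - h v / p v) := by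
    funext v; rw [hu v, hpα]; rfl
  have hu_int : IntegrableOn u (Icc (-1 : ℝ) 1) := by
    rw [hu_eq]; exact ((integrable_const _).sub hhp_int).const_mul _
  have hu_mean : velocityMean u = 0 := by
    rw [hu_eq, velocityMean_const_mul_sub hhp_int, sub_self, mul_zero]
  have hLu : ∀ v ∈ Icc (-1 : ℝ) 1, collisionOp p u v = h v := fun v hv =>
    (collisionOp_eq_iff hp (hu_int.continuousOn_mul hp_cont isCompact_Icc) (hp0 v hv) hα0).2
      (by rw [hu_eq, velocityMean_mul_explicitSolution hp hp0 hh_int hmean hα0])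
  refine ⟨hu_mean, ae_restrict_of_forall_mem measurableSet_Icc hLu,
    fun u' hu' hu'_mean hLu' => ?_⟩
  refine ae_eq_of_collisionOp_ae_eq hp_cont hp0 hα0 (hu'.integrable one_le_two) hu_int hu'_mean
    hu_mean ?_
  filter_upwards [hLu', ae_restrict_mem measurableSet_Icc] with v hv hvI
  exact hv.trans (hLu v hvI).symm
end

section
/- Let p : [-1,1] → ℝ be continuous, even and strictly positive, define L f(v) = (1/2)∫_{-1}^{1} p(v) p(w) (f(w) − f(v)) dw, and set α = ∫_0^1 p(v) dv. Then the function u(v) := −v/(α p(v)) satisfies ⟨u⟩_V = 0 and (L u)(v) = v for every v ∈ [-1,1], and the diffusion coefficient κ := −⟨v u⟩_V = −(1/2)∫_{-1}^1 v u(v) dv satisfies κ = (∫_0^1 v²/p(v) dv) / (∫_0^1 p(v) dv) > 0. -/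
open MeasureTheory Set

/-- for the product-kernel collision operator with cross section
`p(v)p(w)`, the function `u(v) = −v/(α p(v))` is the mean-zero solution of
`L u = v`, and the diffusion coefficient `κ = −⟨v u⟩_V` equals
`(∫_0^1 v²/p)/(∫_0^1 p) > 0`. -/
theorem stmt_5
    (p : ℝ → ℝ)
    (hp_cont : ContinuousOn p (Icc (-1:ℝ) 1))
    (hp_even : ∀ v ∈ Icc (-1:ℝ) 1, p (-v) = p v)
    (hp_pos : ∀ v ∈ Icc (-1:ℝ) 1, 0 < p v)
    (α : ℝ) (hα : α = ∫ v in (0:ℝ)..1, p v)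
    (u : ℝ → ℝ) (hu : ∀ v, u v = -v / (α * p v))
    (κ : ℝ) (hκ : κ = -((1/2) * ∫ v in (-1:ℝ)..1, v * u v)) :
    -- u has zero mean
    ((1/2) * ∫ v in (-1:ℝ)..1, u v) = 0 ∧
    -- L u = v for every v ∈ [-1,1]
    (∀ v ∈ Icc (-1:ℝ) 1,
        (1/2) * (∫ w in (-1:ℝ)..1, p v * p w * (u w - u v)) = v) ∧
    -- value and positivity of the diffusion coefficient
    κ = (∫ v in (0:ℝ)..1, v^2 / p v) / (∫ v in (0:ℝ)..1, p v) ∧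
    0 < κ := by
  have hsub01 : Icc (0:ℝ) 1 ⊆ Icc (-1:ℝ) 1 := Icc_subset_Icc (by norm_num) le_rfl
  have huIcc : uIcc (-1:ℝ) 1 = Icc (-1:ℝ) 1 := uIcc_of_le (by norm_num)
  have huIcc01 : uIcc (0:ℝ) 1 = Icc (0:ℝ) 1 := uIcc_of_le (by norm_num)
  -- α > 0
  have hpI01 : IntervalIntegrable p volume 0 1 :=
    (hp_cont.mono (huIcc01 ▸ hsub01)).intervalIntegrable
  have hα_pos : 0 < α := by
    rw [hα]
    exact intervalIntegral.intervalIntegral_pos_of_pos_on hpI01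
      (fun x hx => hp_pos x (hsub01 (Ioo_subset_Icc_self hx))) one_pos
  have hα_ne : α ≠ 0 := ne_of_gt hα_pos
  -- oddness of u on Icc
  have hu_odd : ∀ v ∈ Icc (-1:ℝ) 1, u (-v) = -u v := by
    intro v hv
    rw [hu, hu, hp_even v hv]
    ring
  -- symmetry of Icc
  have hneg_mem : ∀ v ∈ Icc (-1:ℝ) 1, -v ∈ Icc (-1:ℝ) 1 := by
    intro v hv; constructor <;> [linarith [hv.2]; linarith [hv.1]]
  -- Part 1: mean zero
  have h1 : (∫ v in (-1:ℝ)..1, u v) = 0 := by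
    have e1 : (∫ v in (-1:ℝ)..1, u (-v)) = ∫ v in (-1:ℝ)..1, u v := by
      simpa using intervalIntegral.integral_comp_neg u (a := -1) (b := 1)
    have e2 : (∫ v in (-1:ℝ)..1, u (-v)) = ∫ v in (-1:ℝ)..1, -u v := by
      apply intervalIntegral.integral_congr
      intro v hv
      exact hu_odd v (huIcc ▸ hv)
    rw [e2, intervalIntegral.integral_neg] at e1
    linarith
  -- ∫_{-1}^1 p = 2α
  have hpI : IntervalIntegrable p volume (-1) 1 :=
    (hp_cont.mono huIcc.subset).intervalIntegrable
  have hp2α : (∫ v in (-1:ℝ)..1, p v) = 2 * α := by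
    have e1 : (∫ v in (0:ℝ)..1, p (-v)) = ∫ v in (-1:ℝ)..0, p v := by
      simpa using intervalIntegral.integral_comp_neg p (a := 0) (b := 1)
    have e2 : (∫ v in (0:ℝ)..1, p (-v)) = ∫ v in (0:ℝ)..1, p v := by
      apply intervalIntegral.integral_congr
      intro v hv
      exact hp_even v (hsub01 (huIcc01 ▸ hv))
    have hsplit : (∫ v in (-1:ℝ)..1, p v) =
        (∫ v in (-1:ℝ)..0, p v) + ∫ v in (0:ℝ)..1, p v := by
      rw [intervalIntegral.integral_add_adjacent_intervals
        (hpI.mono_set (by rw [huIcc, uIcc_of_le (by norm_num : (-1:ℝ) ≤ 0)]; exact Icc_subset_Icc le_rfl (by norm_num)))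
        (hpI.mono_set (by rw [huIcc, huIcc01]; exact hsub01))]
    rw [hsplit, ← e1, e2, hα]; ring
  -- p·u = -v/α on Icc
  have hpu : ∀ w ∈ Icc (-1:ℝ) 1, p w * u w = -w / α := by
    intro w hw
    rw [hu]
    have := (hp_pos w hw).ne'
    field_simp
  -- Part 2
  have h2 : ∀ v ∈ Icc (-1:ℝ) 1,
      (1/2) * (∫ w in (-1:ℝ)..1, p v * p w * (u w - u v)) = v := by
    intro v hv
    have hpv := (hp_pos v hv).ne'
    have key : (∫ w in (-1:ℝ)..1, p v * p w * (u w - u v)) =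
        ∫ w in (-1:ℝ)..1, (p v * (-w / α) - (p v * u v) * p w) := by
      apply intervalIntegral.integral_congr
      intro w hw
      have hw' := huIcc ▸ hw
      have := hpu w hw'
      calc p v * p w * (u w - u v) = p v * (p w * u w) - (p v * u v) * p w := by ring
        _ = p v * (-w / α) - (p v * u v) * p w := by rw [this]
    rw [key, intervalIntegral.integral_sub
        (by apply Continuous.intervalIntegrable; continuity)
        (hpI.const_mul _),
      intervalIntegral.integral_const_mul, intervalIntegral.integral_const_mul, hp2α]
    have : (∫ w in (-1:ℝ)..1, -w / α) = 0 := by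
      have : (∫ w in (-1:ℝ)..1, -w / α) = (-1/α) * ∫ w in (-1:ℝ)..1, w := by
        rw [← intervalIntegral.integral_const_mul]
        congr 1; funext w; ring
      rw [this, integral_id]; norm_num
    rw [this, hu]
    field_simp
    ring
  -- Part 3
  have hI2 : (∫ v in (-1:ℝ)..1, v * u v) = -2 * ((∫ v in (0:ℝ)..1, v^2 / p v) / α) := by
    have hf_cont : ContinuousOn (fun v => v^2 / p v) (Icc (-1:ℝ) 1) :=
      (continuousOn_pow 2).div hp_cont (fun x hx => (hp_pos x hx).ne')
    have hg : ∀ v ∈ Icc (-1:ℝ) 1, v * u v = -(1/α) * (v^2 / p v) := by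
      intro v hv
      rw [hu]
      ring
    have e0 : (∫ v in (-1:ℝ)..1, v * u v) = ∫ v in (-1:ℝ)..1, -(1/α) * (v^2 / p v) := by
      apply intervalIntegral.integral_congr
      intro v hv; exact hg v (huIcc ▸ hv)
    have hfI : IntervalIntegrable (fun v => v^2 / p v) volume (-1) 1 :=
      (hf_cont.mono huIcc.subset).intervalIntegrable
    -- evenness of v^2/p v
    have heven : (∫ v in (-1:ℝ)..1, v^2 / p v) = 2 * ∫ v in (0:ℝ)..1, v^2 / p v := by
      have e1 : (∫ v in (0:ℝ)..1, (-v)^2 / p (-v)) = ∫ v in (-1:ℝ)..0, v^2 / p v := by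
        have := intervalIntegral.integral_comp_neg (fun v => v^2 / p v) (a := 0) (b := 1)
        simpa using this
      have e2 : (∫ v in (0:ℝ)..1, (-v)^2 / p (-v)) = ∫ v in (0:ℝ)..1, v^2 / p v := by
        apply intervalIntegral.integral_congr
        intro v hv
        show (-v)^2 / p (-v) = v^2 / p v
        rw [hp_even v (hsub01 (huIcc01 ▸ hv))]
        ring
      have hsplit : (∫ v in (-1:ℝ)..1, v^2 / p v) =
          (∫ v in (-1:ℝ)..0, v^2 / p v) + ∫ v in (0:ℝ)..1, v^2 / p v := by
        rw [intervalIntegral.integral_add_adjacent_intervals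
          (hfI.mono_set (by rw [huIcc, uIcc_of_le (by norm_num : (-1:ℝ) ≤ 0)]; exact Icc_subset_Icc le_rfl (by norm_num)))
          (hfI.mono_set (by rw [huIcc, huIcc01]; exact hsub01))]
      rw [hsplit, ← e1, e2]; ring
    rw [e0, intervalIntegral.integral_const_mul, heven]
    ring
  have hκval : κ = (∫ v in (0:ℝ)..1, v^2 / p v) / (∫ v in (0:ℝ)..1, p v) := by
    rw [hκ, hI2, ← hα]; ring
  have hκpos : 0 < κ := by
    rw [hκval, ← hα]
    apply div_pos _ hα_pos
    apply intervalIntegral.intervalIntegral_pos_of_pos_on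
      ((( continuousOn_pow 2).div hp_cont (fun x hx => (hp_pos x hx).ne')).mono
        (huIcc01 ▸ hsub01)).intervalIntegrable
      _ one_pos
    intro x hx
    have hx' : x ∈ Icc (-1:ℝ) 1 := hsub01 (Ioo_subset_Icc_self hx)
    exact div_pos (pow_pos hx.1 2) (hp_pos x hx')
  exact ⟨by rw [h1]; ring, h2, hκval, hκpos⟩
end

section
/- Let H be a finite-dimensional real inner product space, let L : H → H be a self-adjoint linear map whose kernel is Span{e} for some e ≠ 0, and let P : H → H be a linear map with P ∘ P = P and range P = Span{e}. Then the map x ↦ L x − P(L x), i.e. (I − P) ∘ L, restricted to ker P, is a linear bijection from ker P onto ker P. -/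
open scoped RealInnerProductSpace

/-- if `L` is self-adjoint with kernel `Span{e}` (`e ≠ 0`) and `P` is an
idempotent with range `Span{e}`, then `(I − P) ∘ L` restricted to `ker P` is a
bijection from `ker P` onto `ker P`. -/
theorem stmt_8
    {H : Type*} [NormedAddCommGroup H] [InnerProductSpace ℝ H]
    [FiniteDimensional ℝ H]
    (L P : H →ₗ[ℝ] H) (e : H) (he : e ≠ 0)
    (hsym : ∀ x y : H, ⟪L x, y⟫ = ⟪x, L y⟫)
    (hkerL : LinearMap.ker L = Submodule.span ℝ {e})
    (hidem : ∀ x : H, P (P x) = P x)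
    (hranP : LinearMap.range P = Submodule.span ℝ {e}) :
    Set.BijOn (fun x => L x - P (L x))
      ((LinearMap.ker P : Submodule ℝ H) : Set H)
      ((LinearMap.ker P : Submodule ℝ H) : Set H) := by
  set T : H →ₗ[ℝ] H := L - P ∘ₗ L with hT
  have hTapp : ∀ x : H, T x = L x - P (L x) := fun x => rfl
  have hmaps : ∀ x ∈ LinearMap.ker P, T x ∈ LinearMap.ker P := by
    intro x _
    simp only [LinearMap.mem_ker, hTapp, map_sub, hidem, sub_self]
  have hPe : P e = e := by
    have : e ∈ LinearMap.range P := by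
      rw [hranP]; exact Submodule.mem_span_singleton_self e
    obtain ⟨y, hy⟩ := this
    rw [← hy, hidem]
  set S : (LinearMap.ker P : Submodule ℝ H) →ₗ[ℝ] (LinearMap.ker P : Submodule ℝ H) :=
    T.restrict hmaps with hS
  have hSinj : Function.Injective S := by
    rw [← LinearMap.ker_eq_bot, LinearMap.ker_eq_bot']
    intro m hm
    obtain ⟨x, hx⟩ := m
    have hx0 : P x = 0 := hx
    have hTx : T x = 0 := congrArg Subtype.val hm
    rw [hTapp] at hTx
    have hLx : L x = P (L x) := sub_eq_zero.mp hTx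
    -- L x ∈ range P = span e = ker L
    have hLxker : L x ∈ LinearMap.ker L := by
      rw [hkerL, ← hranP, hLx]
      exact ⟨L x, rfl⟩
    have hLLx : L (L x) = 0 := hLxker
    have hinner : ⟪L x, L x⟫ = (0 : ℝ) := by
      rw [hsym, hLLx, inner_zero_right]
    have hLx0 : L x = 0 := inner_self_eq_zero.mp hinner
    have hxker : x ∈ Submodule.span ℝ {e} := by rw [← hkerL]; exact hLx0
    obtain ⟨t, rfl⟩ := Submodule.mem_span_singleton.mp hxker
    have : t • e = 0 := by
      have := hx0
      rw [map_smul, hPe] at this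
      exact this
    rcases smul_eq_zero.mp this with h | h
    · simp [h]
    · exact absurd h he
  have hSsurj : Function.Surjective S := LinearMap.injective_iff_surjective.mp hSinj
  refine ⟨fun x hx => hmaps x hx, ?_, ?_⟩
  · intro x hx y hy hxy
    have : S ⟨x, hx⟩ = S ⟨y, hy⟩ := Subtype.ext hxy
    exact congrArg Subtype.val (hSinj this)
  · intro y hy
    obtain ⟨x, hx⟩ := hSsurj ⟨y, hy⟩
    exact ⟨x, x.2, congrArg Subtype.val hx⟩
end

section
/- Let L h = ⟨h⟩_V·1 − h and Π_{V_-} h = (∫_0^1 h(v) dv)·1 on L²([-1,1]), and set L̃ = (I − Π_{V_-}) ∘ L ∘ (I − Π_{V_-}). Then for every λ > 0 the operator λ·I − L̃ is a bijection of L²([-1,1]) onto itself, with inverse given explicitly by k ↦ (1/(λ+1))( k + (1/λ)·⟨k⟩_{V_-}·1 ). -/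
open MeasureTheory Set intervalIntegral

/-! Since `I − Π_{V_-}` annihilates constants and `L g` is a constant minus `g`, one gets
`L̃ = −(I − Π_{V_-})² = Π_{V_-} − I`. Hence `λI − L̃ = (λ + 1)I − Π_{V_-}`, and as `Π_{V_-}` is
the identity on constants, its inverse is `(λ + 1)⁻¹ (I + λ⁻¹ Π_{V_-})`. -/

namespace IncomingProjection

/-- `⟨g⟩_{V_-}`, the coefficient of `Π_{V_-} g`. -/
noncomputable def incomingMean (g : ℝ → ℝ) : ℝ := ∫ w in (0:ℝ)..1, g w

/-- `I − Π_{V_-}`. -/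
noncomputable def projectOut (g : ℝ → ℝ) (w : ℝ) : ℝ := g w - incomingMean g

/-- `L = Π − I`. -/
noncomputable def collision (g : ℝ → ℝ) (w : ℝ) : ℝ := (1/2) * (∫ u in (-1:ℝ)..1, g u) - g w

variable {g : ℝ → ℝ}

theorem incomingMean_mul_add (hg : IntervalIntegrable g volume 0 1) (a b : ℝ) :
    incomingMean (fun w => a * g w + b) = a * incomingMean g + b := by
  simp [incomingMean, integral_add (hg.const_mul a) intervalIntegrable_const,
    intervalIntegral.integral_const_mul]

theorem intervalIntegrable_projectOut (hg : IntervalIntegrable g volume 0 1) :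
    IntervalIntegrable (projectOut g) volume 0 1 :=
  hg.sub intervalIntegrable_const

theorem incomingMean_projectOut (hg : IntervalIntegrable g volume 0 1) :
    incomingMean (projectOut g) = 0 := by
  have h := incomingMean_mul_add hg 1 (-incomingMean g)
  simp only [one_mul, ← sub_eq_add_neg, sub_self] at h
  exact h

theorem projectOut_projectOut (hg : IntervalIntegrable g volume 0 1) :
    projectOut (projectOut g) = projectOut g := by
  funext w
  rw [projectOut, incomingMean_projectOut hg, sub_zero]

theorem projectOut_const_sub (hg : IntervalIntegrable g volume 0 1) (c : ℝ) :
    projectOut (fun w => c - g w) = fun w => -projectOut g w := by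
  funext w
  have h := incomingMean_mul_add hg (-1) c
  simp only [neg_one_mul, neg_add_eq_sub] at h
  rw [projectOut, projectOut, h]
  ring

theorem projectOut_collision_projectOut (hg : IntervalIntegrable g volume 0 1) :
    projectOut (collision (projectOut g)) = fun w => incomingMean g - g w := by
  unfold collision
  rw [projectOut_const_sub (intervalIntegrable_projectOut hg),
    projectOut_projectOut hg]
  funext w
  rw [projectOut, neg_sub]

end IncomingProjection

open IncomingProjection in
/-- for `λ > 0`, the operator `λI − L̃` with
`L̃ = (I − Π_{V_-}) L (I − Π_{V_-})` is a bijection of `L²([-1,1])` onto itself, with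
explicit inverse `B : k ↦ (1/(λ+1))(k + (1/λ)⟨k⟩_{V_-}·1)`: the two compositions
are the identity. -/
theorem stmt_11
    (lam : ℝ) (hlam : 0 < lam)
    -- the operator L̃ = (I − Π_{V_-}) ∘ L ∘ (I − Π_{V_-})
    (Lt : (ℝ → ℝ) → ℝ → ℝ)
    (hLt : ∀ h : ℝ → ℝ, ∀ v : ℝ,
      Lt h v =
        (fun Lk : ℝ → ℝ => Lk v - ∫ w in (0:ℝ)..1, Lk w)
          (fun w =>
            (1/2) * (∫ u in (-1:ℝ)..1, (h u - ∫ s in (0:ℝ)..1, h s))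
              - (h w - ∫ s in (0:ℝ)..1, h s)))
    -- the claimed inverse of λI − L̃
    (B : (ℝ → ℝ) → ℝ → ℝ)
    (hB : ∀ k : ℝ → ℝ, ∀ v : ℝ,
      B k v = (1/(lam+1)) * (k v + (1/lam) * ∫ w in (0:ℝ)..1, k w)) :
    ∀ h : ℝ → ℝ, MemLp h 2 (volume.restrict (Icc (-1:ℝ) 1)) →
      ∀ v ∈ Icc (-1:ℝ) 1,
        B (fun w => lam * h w - Lt h w) v = h v ∧
        lam * B h v - Lt (B h) v = h v := by
  intro h hh v _
  -- the right-hand side of `hLt` is `projectOut (collision (projectOut g)) x` unfolded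
  have hL : ∀ g, IntervalIntegrable g volume 0 1 → ∀ x, Lt g x = incomingMean g - g x :=
    fun g hg x => (hLt g x).trans (congrFun (projectOut_collision_projectOut hg) x)
  have hint : IntervalIntegrable h volume 0 1 := by
    have hon : IntegrableOn h (Icc (-1) 1) := hh.integrable (by norm_num)
    exact (intervalIntegrable_iff_integrableOn_Icc_of_le zero_le_one).2
      (hon.mono_set (Icc_subset_Icc (by norm_num) le_rfl))
  have hBh : B h = fun w => (1/(lam+1)) * h w + (1/(lam+1)) * ((1/lam) * incomingMean h) := by
    funext w; rw [hB, incomingMean]; ring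
  have hBint : IntervalIntegrable (B h) volume 0 1 := by
    rw [hBh]; exact (hint.const_mul _).add intervalIntegrable_const
  have hlam0 : lam ≠ 0 := hlam.ne'
  constructor
  · have hshift :
        (fun w => lam * h w - Lt h w) = fun w => (lam + 1) * h w + -incomingMean h := by
      funext w; rw [hL h hint]; ring
    have hmean := incomingMean_mul_add hint (lam + 1) (-incomingMean h)
    rw [hshift, hB, ← incomingMean, hmean]
    field_simp
    ring
  · have hmean :=
      incomingMean_mul_add hint (1/(lam+1)) ((1/(lam+1)) * ((1/lam) * incomingMean h))
    rw [hL _ hBint, hBh, hmean]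
    field_simp
    ring
end

section
/- Let f : [-1,1] → ℝ be integrable. Define u(v) := ⟨v⁺ f⟩_V − v⁺ f(v), where v⁺ = max(v,0). Then ⟨u⟩_V = 0 and (L u)(v) = v⁺ f(v) − ⟨v⁺ f⟩_V for all v (i.e. u = L^{-1}(I − Π)(v⁺ f) for L = Π − I), and the limiting boundary value of the first scheme, ρ̃₀ := 2 ⟨v u⟩_V / ⟨v L^{-1}(v)⟩_V, where L^{-1}(v) = −v so that ⟨v L^{-1}(v)⟩_V = −1/3, satisfies ρ̃₀ = ∫_0^1 3 v² f(v) dv. In other words, the first scheme's limiting boundary kernel is K₂(v) = 3v². -/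
open MeasureTheory Set

/-- for `L = Π − I`, the function `u = ⟨v⁺f⟩_V − v⁺f` satisfies
`⟨u⟩_V = 0` and `L u = v⁺f − ⟨v⁺f⟩_V`, i.e. `u = L⁻¹(I − Π)(v⁺f)`, and the limiting
boundary value of the first scheme, `ρ̃₀ = 2⟨v u⟩_V / ⟨v L⁻¹(v)⟩_V` with
`⟨v L⁻¹(v)⟩_V = −1/3`, equals `∫_0^1 3v² f(v) dv`: the kernel is `K₂(v) = 3v²`. -/
theorem stmt_13
    (f : ℝ → ℝ)
    (hf : IntervalIntegrable f MeasureTheory.volume (-1) 1)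
    (u : ℝ → ℝ)
    (hu : ∀ v, u v = (1/2) * (∫ w in (-1:ℝ)..1, max w 0 * f w) - max v 0 * f v) :
    -- ⟨u⟩_V = 0
    ((1/2) * ∫ v in (-1:ℝ)..1, u v) = 0 ∧
    -- (L u)(v) = v⁺ f(v) − ⟨v⁺ f⟩_V for all v
    (∀ v : ℝ, (1/2) * (∫ w in (-1:ℝ)..1, u w) - u v
        = max v 0 * f v - (1/2) * (∫ w in (-1:ℝ)..1, max w 0 * f w)) ∧
    -- ⟨v L⁻¹(v)⟩_V = −1/3  with  L⁻¹(v) = −v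
    ((1/2) * ∫ v in (-1:ℝ)..1, v * (-v)) = -(1/3) ∧
    -- the limiting boundary value of the first scheme
    (2 * ((1/2) * ∫ v in (-1:ℝ)..1, v * u v)) / (-(1/3))
        = ∫ v in (0:ℝ)..1, 3 * v^2 * f v := by
  have hg : IntervalIntegrable (fun w => max w 0 * f w) volume (-1) 1 :=
    hf.continuousOn_mul (by fun_prop)
  set C : ℝ := (1/2) * (∫ w in (-1:ℝ)..1, max w 0 * f w) with hC
  -- ∫ u = 0
  have hint : (∫ v in (-1:ℝ)..1, u v) = 0 := by
    have : (∫ v in (-1:ℝ)..1, u v)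
        = ∫ v in (-1:ℝ)..1, (C - max v 0 * f v) := by
      apply intervalIntegral.integral_congr
      intro v _; simp only []; rw [hu v]
    rw [this, intervalIntegral.integral_sub (intervalIntegrable_const) hg,
      intervalIntegral.integral_const]
    simp [hC]
    ring
  refine ⟨by rw [hint]; ring, ?_, ?_, ?_⟩
  · intro v
    rw [hint, hu v]; ring
  · have : (∫ v in (-1:ℝ)..1, v * (-v)) = ∫ v in (-1:ℝ)..1, -(v^2) := by
      apply intervalIntegral.integral_congr; intro v _; simp only []; ring
    rw [this, intervalIntegral.integral_neg, integral_pow]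
    norm_num
  · -- the main computation
    have hvg : IntervalIntegrable (fun v => v * (max v 0 * f v)) volume (-1) 1 :=
      hg.continuousOn_mul (by fun_prop)
    have h1 : (∫ v in (-1:ℝ)..1, v * u v)
        = (∫ v in (-1:ℝ)..1, v * C) - ∫ v in (-1:ℝ)..1, v * (max v 0 * f v) := by
      have hc : IntervalIntegrable (fun v : ℝ => v * C) volume (-1) 1 :=
        ((by fun_prop : Continuous fun v : ℝ => v * C)).intervalIntegrable _ _
      rw [← intervalIntegral.integral_sub hc hvg]
      apply intervalIntegral.integral_congr
      intro v _; simp only []; rw [hu v]; ring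
    have h2 : (∫ v in (-1:ℝ)..1, v * C) = 0 := by
      rw [intervalIntegral.integral_mul_const, integral_id]; ring
    have h3 : (∫ v in (-1:ℝ)..1, v * (max v 0 * f v))
        = ∫ v in (0:ℝ)..1, v^2 * f v := by
      have hsplit := intervalIntegral.integral_add_adjacent_intervals
        (a := (-1:ℝ)) (b := 0) (c := 1)
        (f := fun v => v * (max v 0 * f v))
        (hvg.mono_set (by rw [uIcc_of_le, uIcc_of_le] <;> norm_num <;>
          exact Icc_subset_Icc le_rfl (by norm_num)))
        (hvg.mono_set (by rw [uIcc_of_le, uIcc_of_le] <;> norm_num <;>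
          exact Icc_subset_Icc (by norm_num) le_rfl))
      have hleft : (∫ v in (-1:ℝ)..0, v * (max v 0 * f v)) = 0 := by
        have h0 : (∫ v in (-1:ℝ)..0, v * (max v 0 * f v))
            = ∫ v in (-1:ℝ)..0, (0:ℝ) := by
          apply intervalIntegral.integral_congr
          intro v hv
          rw [uIcc_of_le (by norm_num)] at hv
          simp only []
          rw [max_eq_right hv.2]; ring
        rw [h0]; simp
      have hright : (∫ v in (0:ℝ)..1, v * (max v 0 * f v))
          = ∫ v in (0:ℝ)..1, v^2 * f v := by
        apply intervalIntegral.integral_congr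
        intro v hv
        rw [uIcc_of_le (by norm_num)] at hv
        simp only []
        rw [max_eq_left hv.1]; ring
      rw [hleft, hright, zero_add] at hsplit
      rw [← hsplit]
    have h4 : (∫ v in (0:ℝ)..1, 3 * v^2 * f v) = 3 * ∫ v in (0:ℝ)..1, v^2 * f v := by
      rw [← intervalIntegral.integral_const_mul]
      apply intervalIntegral.integral_congr
      intro v _; simp only []; ring
    rw [h1, h2, h3, h4]; ring
end

section
/- Let f_ℓ : (0,1] → ℝ be integrable and set ρ̄₀ = ∫_0^1 f_ℓ(v) dv. Define λ_ℓ := ⟨v⁺ (f_ℓ − ρ̄₀)⟩_V / ⟨v⁻ (v − 1/2)⟩_V (where f_ℓ − ρ̄₀ is extended by 0 to [-1,0], v⁺ = max(v,0), v⁻ = min(v,0)), that is, λ_ℓ = [ (1/2)∫_0^1 v (f_ℓ(v) − ρ̄₀) dv ] / [ (1/2)∫_{-1}^0 v(v − 1/2) dv ]. Then λ_ℓ = (12/7)∫_0^1 v f_ℓ(v) dv − (6/7)∫_0^1 f_ℓ(v) dv, and the limiting boundary value of the scheme, ρ̂₀ := ρ̄₀ + 3 ⟨v · v⁺(f_ℓ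 − ρ̄₀)⟩_V − 3 λ_ℓ ⟨v · v⁻ (v − 1/2)⟩_V, satisfies ρ̂₀ = ∫_0^1 ( (3/2) v² + (15/14) v − 1/28 ) f_ℓ(v) dv. In other words, the limiting boundary kernel of the scheme with boundary treatment is K₃(v) = (3/2)v² + (15/14)v − 1/28. -/
open MeasureTheory Set

/-- the limiting boundary value of the scheme with boundary treatment.
With `ρ̄₀ = ∫_0^1 f_ℓ`, the slope `λ_ℓ = ⟨v⁺(f_ℓ − ρ̄₀)⟩_V / ⟨v⁻(v − 1/2)⟩_V` equals
`(12/7)∫_0^1 v f_ℓ − (6/7)∫_0^1 f_ℓ`, and the limiting boundary value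
`ρ̂₀ = ρ̄₀ + 3⟨v·v⁺(f_ℓ − ρ̄₀)⟩_V − 3λ_ℓ⟨v·v⁻(v − 1/2)⟩_V` equals
`∫_0^1 ((3/2)v² + (15/14)v − 1/28) f_ℓ(v) dv`, i.e. the kernel is
`K₃(v) = (3/2)v² + (15/14)v − 1/28`. -/
theorem stmt_14
    (f : ℝ → ℝ)
    (hf : IntervalIntegrable f MeasureTheory.volume 0 1)
    (ρ0 : ℝ) (hρ0 : ρ0 = ∫ v in (0:ℝ)..1, f v)
    (lam : ℝ)
    -- λ_ℓ = ⟨v⁺(f_ℓ − ρ̄₀)⟩_V / ⟨v⁻(v − 1/2)⟩_V, with f_ℓ − ρ̄₀ extended by 0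
    (hlam : lam = ((1/2) * ∫ v in (0:ℝ)..1, v * (f v - ρ0)) /
                  ((1/2) * ∫ v in (-1:ℝ)..0, v * (v - 1/2)))
    (ρhat : ℝ)
    -- ρ̂₀ = ρ̄₀ + 3⟨v·v⁺(f_ℓ − ρ̄₀)⟩_V − 3λ_ℓ⟨v·v⁻(v − 1/2)⟩_V
    (hρhat : ρhat = ρ0 + 3 * ((1/2) * ∫ v in (0:ℝ)..1, v * (v * (f v - ρ0)))
                       - 3 * lam * ((1/2) * ∫ v in (-1:ℝ)..0, v * (v * (v - 1/2)))) :
    lam = (12/7) * (∫ v in (0:ℝ)..1, v * f v) - (6/7) * (∫ v in (0:ℝ)..1, f v) ∧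
    ρhat = ∫ v in (0:ℝ)..1, ((3/2) * v^2 + (15/14) * v - 1/28) * f v := by
  have hvf : IntervalIntegrable (fun v => v * f v) volume 0 1 :=
    hf.continuousOn_mul (continuous_id.continuousOn)
  have hv2f : IntervalIntegrable (fun v => v ^ 2 * f v) volume 0 1 :=
    hf.continuousOn_mul ((continuous_pow 2).continuousOn)
  have hK : IntervalIntegrable (fun v => ((3/2) * v^2 + (15/14) * v - 1/28) * f v) volume 0 1 :=
    hf.continuousOn_mul (by fun_prop)
  -- denominator integrals
  have hden1 : (∫ v in (-1:ℝ)..0, v * (v - 1/2)) = 7/12 := by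
    have : (fun v : ℝ => v * (v - 1/2)) = fun v => v ^ 2 - (1/2) * v := by
      funext v; ring
    rw [this, intervalIntegral.integral_sub ((continuous_pow 2).intervalIntegrable _ _)
      ((by continuity : Continuous fun v:ℝ => (1/2)*v).intervalIntegrable _ _),
      intervalIntegral.integral_const_mul]
    simp [integral_pow]
    norm_num
  have hden2 : (∫ v in (-1:ℝ)..0, v * (v * (v - 1/2))) = -5/12 := by
    have : (fun v : ℝ => v * (v * (v - 1/2))) = fun v => v ^ 3 - (1/2) * v ^ 2 := by
      funext v; ring
    rw [this, intervalIntegral.integral_sub ((continuous_pow 3).intervalIntegrable _ _)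
      ((by continuity : Continuous fun v:ℝ => (1/2)*v^2).intervalIntegrable _ _),
      intervalIntegral.integral_const_mul]
    simp [integral_pow]
    norm_num
  -- numerator integrals
  have hnum1 : (∫ v in (0:ℝ)..1, v * (f v - ρ0)) = (∫ v in (0:ℝ)..1, v * f v) - ρ0 / 2 := by
    have : (fun v : ℝ => v * (f v - ρ0)) = fun v => v * f v - ρ0 * v := by
      funext v; ring
    rw [this, intervalIntegral.integral_sub hvf ((by continuity : Continuous fun v:ℝ => ρ0*v).intervalIntegrable _ _)]
    rw [intervalIntegral.integral_const_mul]
    simp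
    ring
  have hnum2 : (∫ v in (0:ℝ)..1, v * (v * (f v - ρ0)))
      = (∫ v in (0:ℝ)..1, v ^ 2 * f v) - ρ0 / 3 := by
    have : (fun v : ℝ => v * (v * (f v - ρ0))) = fun v => v ^ 2 * f v - ρ0 * v ^ 2 := by
      funext v; ring
    rw [this, intervalIntegral.integral_sub hv2f ((by continuity : Continuous fun v:ℝ => ρ0*v^2).intervalIntegrable _ _)]
    rw [intervalIntegral.integral_const_mul]
    simp
    ring
  have hlam' : lam = (12/7) * (∫ v in (0:ℝ)..1, v * f v) - (6/7) * (∫ v in (0:ℝ)..1, f v) := by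
    rw [hlam, hnum1, hden1, hρ0]; ring
  refine ⟨hlam', ?_⟩
  have hexp : (∫ v in (0:ℝ)..1, ((3/2) * v^2 + (15/14) * v - 1/28) * f v)
      = (3/2) * (∫ v in (0:ℝ)..1, v ^ 2 * f v) + (15/14) * (∫ v in (0:ℝ)..1, v * f v)
        - (1/28) * (∫ v in (0:ℝ)..1, f v) := by
    have : (fun v : ℝ => ((3/2) * v^2 + (15/14) * v - 1/28) * f v)
        = fun v => (3/2) * (v ^ 2 * f v) + (15/14) * (v * f v) - (1/28) * f v := by
      funext v; ring
    rw [this, intervalIntegral.integral_sub (((hv2f.const_mul _).add (hvf.const_mul _)))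
        (hf.const_mul _),
      intervalIntegral.integral_add (hv2f.const_mul _) (hvf.const_mul _),
      intervalIntegral.integral_const_mul, intervalIntegral.integral_const_mul,
      intervalIntegral.integral_const_mul]
  rw [hρhat, hnum2, hden2, hlam', hexp, hρ0]; ring
end
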